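/- For all x, y, z > 0 and t ≥ 0 with x + y + z + t = 1: (1 − t³)² ≥ E(2√(xy))² + E(2√(xz))² + E(2√(yz))². (All three-qubit W-class pure states satisfy the source-entanglement monogamy relation E_s² ≥ E₁₂² + E₁₃² + E₂₃².) -/

import Mathlib

/-!
Each pairwise term is dominated by a polynomial in the squared concurrence `u = C²`:
`E(C)² ≤ u/2 + (29u² - 4u³)/50`. For `u ≤ 1/20` even `E(C)² ≤ u/2` holds: writing the argument
`q ≤ 1/2` of the entropy as `q = v⁸`, the bound `log v⁻¹ ≤ v⁻¹ - 1` controls `q log q⁻¹`.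
For `u ≥ 1/20` it suffices to keep the first four terms of
`(1+r) log(1+r) + (1-r) log(1-r) = ∑ r^(2k) / (k(2k-1))`, where `r² = 1 - u`.
With `u = 4ab` the three majorants sum to at most `(x+y+z)²`, a polynomial inequality resting on
Schur's inequality, and `x + y + z = 1 - t ≤ 1 - t³`.
-/

/-- Binary Shannon entropy (base 2), with the convention `0 * log₂ 0 = 0`
(automatic since `Real.logb 2 0 = 0`). -/
noncomputable def binEntropy (p : ℝ) : ℝ :=
  -p * Real.logb 2 p - (1 - p) * Real.logb 2 (1 - p)

/-- Entanglement-of-formation function of the concurrence `C`. -/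
noncomputable def eof (C : ℝ) : ℝ :=
  binEntropy ((1 + Real.sqrt (1 - C ^ 2)) / 2)

open Real hiding binEntropy
open Set Finset

def schurSum (k : ℕ) (x y z : ℝ) : ℝ :=
  x ^ k * (x - y) * (x - z) + y ^ k * (y - x) * (y - z) + z ^ k * (z - x) * (z - y)

theorem schurSum_swap_left (k : ℕ) (x y z : ℝ) : schurSum k x y z = schurSum k y x z := by
  unfold schurSum; ring

theorem schurSum_swap_right (k : ℕ) (x y z : ℝ) : schurSum k x y z = schurSum k x z y := by
  unfold schurSum; ring

theorem schurSum_nonneg_of_le {k : ℕ} {x y z : ℝ} (hz : 0 ≤ z) (hzy : z ≤ y) (hyx : y ≤ x) :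
    0 ≤ schurSum k x y z := by
  have hpow : y ^ k ≤ x ^ k := pow_le_pow_left₀ (hz.trans hzy) hyx k
  have h₁ : 0 ≤ (x - y) * (x ^ k * (x - z) - y ^ k * (y - z)) :=
    mul_nonneg (sub_nonneg.2 hyx)
      (sub_nonneg.2 (mul_le_mul hpow (by linarith) (by linarith)
        (pow_nonneg (hz.trans (hzy.trans hyx)) k)))
  have h₂ : 0 ≤ z ^ k * ((x - z) * (y - z)) :=
    mul_nonneg (pow_nonneg hz k) (mul_nonneg (by linarith) (by linarith))
  have : schurSum k x y z = (x - y) * (x ^ k * (x - z) - y ^ k * (y - z)) +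
      z ^ k * ((x - z) * (y - z)) := by
    unfold schurSum; ring
  linarith

theorem schurSum_nonneg (k : ℕ) {x y z : ℝ} (hx : 0 ≤ x) (hy : 0 ≤ y) (hz : 0 ≤ z) :
    0 ≤ schurSum k x y z := by
  wlog hyx : y ≤ x generalizing x y
  · rw [schurSum_swap_left]; exact this hy hx (le_of_not_ge hyx)
  wlog hzy : z ≤ y generalizing y z
  · rw [schurSum_swap_right]
    rcases le_total z x with hzx | hxz
    · exact this hy hz hzx (le_of_not_ge hzy)
    · rw [schurSum_swap_left]
      exact schurSum_nonneg_of_le hy hyx hxz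
  exact schurSum_nonneg_of_le hz hzy hyx

theorem sum_sq_mul_le_homogeneous {x y z : ℝ} (hx : 0 ≤ x) (hy : 0 ≤ y) (hz : 0 ≤ z) :
    1160 * ((x * y) ^ 2 + (x * z) ^ 2 + (y * z) ^ 2) * (x + y + z) ^ 2 ≤
      125 * (x ^ 2 + y ^ 2 + z ^ 2) * (x + y + z) ^ 4 +
        640 * ((x * y) ^ 3 + (x * z) ^ 3 + (y * z) ^ 3) := by
  have hschur₁ : 0 ≤ (x + y + z) ^ 3 * schurSum 1 x y z :=
    mul_nonneg (by positivity) (schurSum_nonneg 1 hx hy hz)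
  have hschur₂ : 0 ≤ (x + y + z) ^ 2 * schurSum 2 x y z :=
    mul_nonneg (by positivity) (schurSum_nonneg 2 hx hy hz)
  have hrest : 0 ≤ 230 * (x * y * z * (x + y + z) * ((x - y) ^ 2 + (y - z) ^ 2 + (x - z) ^ 2))
      + 80 * (x ^ 3 * y * (x - y) ^ 2 + y ^ 3 * x * (x - y) ^ 2 + x ^ 3 * z * (x - z) ^ 2
        + z ^ 3 * x * (x - z) ^ 2 + y ^ 3 * z * (y - z) ^ 2 + z ^ 3 * y * (y - z) ^ 2)
      + 195 * (x * y * (x ^ 2 - y ^ 2) ^ 2 + x * z * (x ^ 2 - z ^ 2) ^ 2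
        + y * z * (y ^ 2 - z ^ 2) ^ 2)
      + 220 * (x * y * z * (x * ((x - y) ^ 2 + (x - z) ^ 2) + y * ((y - x) ^ 2 + (y - z) ^ 2)
        + z * ((z - x) ^ 2 + (z - y) ^ 2)))
      + 325 * (x * y * z * (x ^ 3 + y ^ 3 + z ^ 3)) := by
    positivity
  have key : 125 * (x ^ 2 + y ^ 2 + z ^ 2) * (x + y + z) ^ 4
      + 640 * ((x * y) ^ 3 + (x * z) ^ 3 + (y * z) ^ 3)
      - 1160 * ((x * y) ^ 2 + (x * z) ^ 2 + (y * z) ^ 2) * (x + y + z) ^ 2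
      = 100 * ((x + y + z) ^ 3 * schurSum 1 x y z) + 25 * ((x + y + z) ^ 2 * schurSum 2 x y z)
      + (230 * (x * y * z * (x + y + z) * ((x - y) ^ 2 + (y - z) ^ 2 + (x - z) ^ 2))
      + 80 * (x ^ 3 * y * (x - y) ^ 2 + y ^ 3 * x * (x - y) ^ 2 + x ^ 3 * z * (x - z) ^ 2
        + z ^ 3 * x * (x - z) ^ 2 + y ^ 3 * z * (y - z) ^ 2 + z ^ 3 * y * (y - z) ^ 2)
      + 195 * (x * y * (x ^ 2 - y ^ 2) ^ 2 + x * z * (x ^ 2 - z ^ 2) ^ 2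
        + y * z * (y ^ 2 - z ^ 2) ^ 2)
      + 220 * (x * y * z * (x * ((x - y) ^ 2 + (x - z) ^ 2) + y * ((y - x) ^ 2 + (y - z) ^ 2)
        + z * ((z - x) ^ 2 + (z - y) ^ 2)))
      + 325 * (x * y * z * (x ^ 3 + y ^ 3 + z ^ 3))) := by
    unfold schurSum; ring
  linarith

theorem sum_sq_mul_le {x y z : ℝ} (hx : 0 ≤ x) (hy : 0 ≤ y) (hz : 0 ≤ z)
    (hs : x + y + z ≤ 1) :
    1160 * ((x * y) ^ 2 + (x * z) ^ 2 + (y * z) ^ 2) ≤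
      125 * (x ^ 2 + y ^ 2 + z ^ 2) + 640 * ((x * y) ^ 3 + (x * z) ^ 3 + (y * z) ^ 3) := by
  have hhom := sum_sq_mul_le_homogeneous hx hy hz
  have hcrude : 1160 * ((x * y) ^ 2 + (x * z) ^ 2 + (y * z) ^ 2) ≤
      125 * (x ^ 2 + y ^ 2 + z ^ 2) * (1 + (x + y + z) ^ 2) := by
    nlinarith [sq_nonneg (x - y), sq_nonneg (y - z), sq_nonneg (x - z),
      mul_nonneg hx hy, mul_nonneg hx hz, mul_nonneg hy hz,
      mul_nonneg (sub_nonneg.2 hs) (mul_nonneg hx hy),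
      mul_nonneg (sub_nonneg.2 hs) (mul_nonneg hx hz),
      mul_nonneg (sub_nonneg.2 hs) (mul_nonneg hy hz)]
  have hs2 : 0 ≤ 1 - (x + y + z) ^ 2 := by nlinarith [add_nonneg (add_nonneg hx hy) hz]
  nlinarith [mul_nonneg hs2 (sub_nonneg.2 hcrude)]

theorem sum_le_log_one_add_sub_log_one_sub {r : ℝ} (h0 : 0 ≤ r) (h1 : r < 1) (n : ℕ) :
    ∑ k ∈ range n, 2 * (1 / (2 * k + 1)) * r ^ (2 * k + 1) ≤ log (1 + r) - log (1 - r) :=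
  sum_le_hasSum _ (fun _ _ ↦ by positivity)
    (hasSum_log_sub_log_of_abs_lt_one (by rwa [abs_of_nonneg h0]))

theorem sum_le_one_add_mul_log_add_one_sub_mul_log {r : ℝ} (h0 : 0 ≤ r) (h1 : r < 1) (n : ℕ) :
    ∑ k ∈ range n, r ^ (2 * k + 2) / (((k : ℝ) + 1) * (2 * k + 1)) ≤
      (1 + r) * log (1 + r) + (1 - r) * log (1 - r) := by
  have hF : ∀ t ∈ Icc 0 r, HasDerivAt (fun t ↦ (1 + t) * log (1 + t) + (1 - t) * log (1 - t))
      (log (1 + t) - log (1 - t)) t := by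
    rintro t ⟨ht0, htr⟩
    have h₁ := (hasDerivAt_mul_log (x := 1 + t) (by linarith)).comp t
      ((hasDerivAt_id t).const_add 1)
    have h₂ := (hasDerivAt_mul_log (x := 1 - t) (by linarith)).comp t
      ((hasDerivAt_id t).const_sub 1)
    exact (h₁.add h₂).congr_deriv (by ring)
  have hP : ∀ t : ℝ,
      HasDerivAt (fun t ↦ ∑ k ∈ range n, t ^ (2 * k + 2) / (((k : ℝ) + 1) * (2 * k + 1)))
      (∑ k ∈ range n, 2 * (1 / (2 * k + 1)) * t ^ (2 * k + 1)) t := by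
    intro t
    refine HasDerivAt.fun_sum fun k _ ↦ ?_
    refine ((hasDerivAt_pow (2 * k + 2) t).div_const _).congr_deriv ?_
    rw [show 2 * k + 2 - 1 = 2 * k + 1 by omega]
    field_simp
    push_cast
    ring
  refine image_le_of_deriv_right_le_deriv_boundary
    (fun t _ ↦ (hP t).continuousAt.continuousWithinAt)
    (fun t _ ↦ (hP t).hasDerivWithinAt) ?_ (fun t ht ↦ (hF t ht).continuousAt.continuousWithinAt)
    (fun t ht ↦ (hF t (Ico_subset_Icc_self ht)).hasDerivWithinAt)
    (fun t ht ↦ sum_le_log_one_add_sub_log_one_sub ht.1 (ht.2.trans h1) n) ⟨h0, le_rfl⟩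
  simp

theorem Real.binEntropy_pow_succ_le {v : ℝ} (n : ℕ) (hv0 : 0 < v) (hv1 : v < 1) :
    Real.binEntropy (v ^ (n + 1)) ≤ (n + 1) * v ^ n - n * v ^ (n + 1) := by
  have hp1 : v ^ (n + 1) < 1 := pow_lt_one₀ hv0.le hv1 (by omega)
  have hlog : log (v ^ (n + 1))⁻¹ ≤ (n + 1) * (v⁻¹ - 1) := by
    rw [← inv_pow, log_pow]
    push_cast
    gcongr
    exact log_le_sub_one_of_pos (by positivity)
  have hlog' : log (1 - v ^ (n + 1))⁻¹ ≤ (1 - v ^ (n + 1))⁻¹ - 1 :=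
    log_le_sub_one_of_pos (by simpa using hp1)
  have h1 : 0 < 1 - v ^ (n + 1) := by linarith
  calc Real.binEntropy (v ^ (n + 1))
      ≤ v ^ (n + 1) * ((n + 1) * (v⁻¹ - 1)) + (1 - v ^ (n + 1)) * ((1 - v ^ (n + 1))⁻¹ - 1) := by
        unfold Real.binEntropy; gcongr
    _ = (n + 1) * v ^ n - n * v ^ (n + 1) := by
        field_simp
        ring

theorem binEntropy_eq_div_log_two (p : ℝ) : binEntropy p = Real.binEntropy p / log 2 := by
  unfold binEntropy Real.binEntropy
  rw [logb, logb, log_inv, log_inv]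
  ring

theorem Real.binEntropy_one_add_div_two {r : ℝ} (h₁ : -1 < r) (h₂ : r < 1) :
    Real.binEntropy ((1 + r) / 2) =
      log 2 - ((1 + r) * log (1 + r) + (1 - r) * log (1 - r)) / 2 := by
  rw [Real.binEntropy, show 1 - (1 + r) / 2 = (1 - r) / 2 by ring, inv_div, inv_div,
    log_div (by norm_num) (by linarith), log_div (by norm_num) (by linarith)]
  ring

theorem eof_nonneg (C : ℝ) : 0 ≤ eof C := by
  have : √(1 - C ^ 2) ≤ 1 := sqrt_le_one.2 (by nlinarith)
  rw [eof, binEntropy_eq_div_log_two]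
  exact div_nonneg (Real.binEntropy_nonneg (by positivity) (by linarith)) (log_nonneg one_le_two)

theorem eof_le_one_sub_sum {C : ℝ} (hC0 : 0 < C) (hC1 : C ≤ 1) (n : ℕ) :
    eof C ≤ 1 - (∑ k ∈ range n, (1 - C ^ 2) ^ (k + 1) / (((k : ℝ) + 1) * (2 * k + 1))) /
      (2 * log 2) := by
  set r := √(1 - C ^ 2)
  have hr2 : r ^ 2 = 1 - C ^ 2 := sq_sqrt (by nlinarith)
  have hr0 : 0 ≤ r := sqrt_nonneg _
  have hr1 : r < 1 := by nlinarith
  have hpow (k : ℕ) : r ^ (2 * k + 2) = (1 - C ^ 2) ^ (k + 1) := by rw [← hr2, ← pow_mul]; ring_nf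
  have hsum := sum_le_one_add_mul_log_add_one_sub_mul_log hr0 hr1 n
  simp only [hpow] at hsum
  rw [eof, binEntropy_eq_div_log_two, Real.binEntropy_one_add_div_two (by linarith) hr1]
  have hlog : 0 < log 2 := log_pos one_lt_two
  calc (log 2 - ((1 + r) * log (1 + r) + (1 - r) * log (1 - r)) / 2) / log 2
      = 1 - ((1 + r) * log (1 + r) + (1 - r) * log (1 - r)) / (2 * log 2) := by field_simp
    _ ≤ _ := by gcongr

theorem sq_eight_mul_pow_seven_sub_le {v : ℝ} (hv0 : 0 ≤ v) (hv : v ≤ 0.58) :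
    (8 * v ^ 7 - 7 * v ^ 8) ^ 2 ≤ 2 * v ^ 8 * (1 - v ^ 8) * log 2 ^ 2 := by
  have hg : v ^ 3 * (8 - 7 * v) ≤ 0.77 := by
    nlinarith [pow_le_pow_left₀ hv0 hv 3, pow_le_pow_left₀ hv0 hv 2,
      mul_nonneg (pow_nonneg hv0 2) (sub_nonneg.2 hv),
      mul_nonneg (pow_nonneg hv0 3) (sub_nonneg.2 hv)]
  have hg0 : 0 ≤ v ^ 3 * (8 - 7 * v) := mul_nonneg (pow_nonneg hv0 3) (by linarith)
  have hv8 : v ^ 8 ≤ 0.58 ^ 8 := pow_le_pow_left₀ hv0 hv 8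
  have hlog := log_two_gt_d9
  have hrhs : 0.6 ≤ 2 * (1 - v ^ 8) * log 2 ^ 2 := by nlinarith
  calc (8 * v ^ 7 - 7 * v ^ 8) ^ 2 = v ^ 8 * (v ^ 3 * (8 - 7 * v)) ^ 2 := by ring
    _ ≤ v ^ 8 * (2 * (1 - v ^ 8) * log 2 ^ 2) := by gcongr; nlinarith
    _ = 2 * v ^ 8 * (1 - v ^ 8) * log 2 ^ 2 := by ring

theorem eof_sq_le_half_sq {C : ℝ} (hC0 : 0 < C) (hC : C ^ 2 ≤ 1 / 20) : eof C ^ 2 ≤ C ^ 2 / 2 := by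
  set r := √(1 - C ^ 2) with hr
  have hr2 : r ^ 2 = 1 - C ^ 2 := sq_sqrt (by nlinarith)
  have hr0 : 0 ≤ r := sqrt_nonneg _
  have hr1 : r < 1 := by nlinarith
  have hr_ge : 0.9746 ≤ r := by nlinarith
  set q := (1 - r) / 2 with hq
  set v := q ^ ((8 : ℕ)⁻¹ : ℝ)
  have hq0 : 0 < q := by linarith
  have hv8 : v ^ 8 = q := rpow_inv_natCast_pow hq0.le (by norm_num)
  have hv0 : 0 < v := by positivity
  have hv058 : v ≤ 0.58 := by
    refine (pow_le_pow_iff_left₀ hv0.le (by norm_num) (by norm_num : 8 ≠ 0)).1 ?_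
    rw [hv8]; norm_num; linarith
  have hv1 : v < 1 := by linarith
  have hH : Real.binEntropy q ≤ 8 * v ^ 7 - 7 * v ^ 8 := by
    have := Real.binEntropy_pow_succ_le 7 hv0 hv1
    norm_num [hv8] at this ⊢
    linarith
  have hC2 : C ^ 2 = 4 * v ^ 8 * (1 - v ^ 8) := by rw [hv8]; nlinarith
  have heof : eof C = Real.binEntropy q / log 2 := by
    rw [eof, binEntropy_eq_div_log_two, ← hr, show (1 + r) / 2 = 1 - q by ring,
      Real.binEntropy_one_sub]
  have hlog : 0 < log 2 := log_pos one_lt_two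
  rw [heof, div_pow, div_le_iff₀ (by positivity), hC2]
  calc Real.binEntropy q ^ 2 ≤ (8 * v ^ 7 - 7 * v ^ 8) ^ 2 :=
        pow_le_pow_left₀ (Real.binEntropy_nonneg hq0.le (by linarith)) hH 2
    _ ≤ 2 * v ^ 8 * (1 - v ^ 8) * log 2 ^ 2 := sq_eight_mul_pow_seven_sub_le hv0.le hv058
    _ = 4 * v ^ 8 * (1 - v ^ 8) / 2 * log 2 ^ 2 := by ring

noncomputable def eofSqMajorant (u : ℝ) : ℝ := u / 2 + (29 * u ^ 2 - 4 * u ^ 3) / 50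

theorem sq_one_sub_div_log_two_le {s : ℝ} (hs0 : 0 ≤ s) (hs1 : s ≤ 19 / 20) :
    (1 - (s + s ^ 2 / 6 + s ^ 3 / 15 + s ^ 4 / 28) / (2 * log 2)) ^ 2 ≤ eofSqMajorant (1 - s) := by
  set S := s + s ^ 2 / 6 + s ^ 3 / 15 + s ^ 4 / 28 with hS
  have hS0 : 0 ≤ S := by positivity
  have hlog : 0 < log 2 := log_pos one_lt_two
  have hlog_gt := log_two_gt_d9
  have hlog_lt := log_two_lt_d9
  have e1 : 1.442695 * S ≤ S / log 2 := by
    rw [le_div_iff₀ hlog]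
    nlinarith [mul_le_mul_of_nonneg_left hlog_lt.le hS0]
  have e2 : (S / (2 * log 2)) ^ 2 ≤ 0.5203423 * S ^ 2 := by
    rw [div_pow, div_le_iff₀ (by positivity)]
    nlinarith [mul_le_mul_of_nonneg_left (by nlinarith : (1.9218120542 : ℝ) ≤ (2 * log 2) ^ 2)
      (sq_nonneg S)]
  have hpoly : 1 - 1.442695 * S + 0.5203423 * S ^ 2 ≤ eofSqMajorant (1 - s) := by
    rw [eofSqMajorant, hS]
    have h := sub_nonneg.2 hs1
    nlinarith [mul_nonneg hs0 h, mul_nonneg (pow_nonneg hs0 2) h, mul_nonneg (pow_nonneg hs0 3) h,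
      mul_nonneg (pow_nonneg hs0 4) h, mul_nonneg (pow_nonneg hs0 5) h,
      mul_nonneg (pow_nonneg hs0 6) h, mul_nonneg (pow_nonneg hs0 7) h]
  calc (1 - S / (2 * log 2)) ^ 2 = 1 - S / log 2 + (S / (2 * log 2)) ^ 2 := by field_simp; ring
    _ ≤ _ := by linarith

theorem eof_sq_le_eofSqMajorant {C : ℝ} (hC0 : 0 < C) (hC1 : C ≤ 1) :
    eof C ^ 2 ≤ eofSqMajorant (C ^ 2) := by
  have hC2 : C ^ 2 ≤ 1 := pow_le_one₀ hC0.le hC1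
  rcases le_total (C ^ 2) (1 / 20) with hsmall | hlarge
  · calc eof C ^ 2 ≤ C ^ 2 / 2 := eof_sq_le_half_sq hC0 hsmall
      _ ≤ eofSqMajorant (C ^ 2) := by
        unfold eofSqMajorant
        nlinarith [mul_nonneg (pow_nonneg (sq_nonneg C) 2) (sub_nonneg.2 hC2)]
  · have hbound := eof_le_one_sub_sum hC0 hC1 4
    norm_num [sum_range_succ] at hbound
    calc eof C ^ 2 ≤ (1 - ((1 - C ^ 2) + (1 - C ^ 2) ^ 2 / 6 + (1 - C ^ 2) ^ 3 / 15
          + (1 - C ^ 2) ^ 4 / 28) / (2 * log 2)) ^ 2 := pow_le_pow_left₀ (eof_nonneg C) hbound 2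
      _ ≤ eofSqMajorant (1 - (1 - C ^ 2)) :=
          sq_one_sub_div_log_two_le (by linarith) (by linarith)
      _ = eofSqMajorant (C ^ 2) := by rw [sub_sub_cancel]

theorem eof_two_sqrt_mul_sq_le {a b : ℝ} (ha : 0 < a) (hb : 0 < b) (hab : a + b ≤ 1) :
    eof (2 * √(a * b)) ^ 2 ≤ eofSqMajorant (4 * (a * b)) := by
  have hsq : (2 * √(a * b)) ^ 2 = 4 * (a * b) := by rw [mul_pow, sq_sqrt (by positivity)]; ring
  have hle : 2 * √(a * b) ≤ 1 := by
    refine (pow_le_one_iff_of_nonneg (by positivity) two_ne_zero).1 ?_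
    nlinarith [sq_nonneg (a - b)]
  simpa [hsq] using eof_sq_le_eofSqMajorant (by positivity) hle

theorem eofSqMajorant_sum_le {x y z : ℝ} (hx : 0 ≤ x) (hy : 0 ≤ y) (hz : 0 ≤ z)
    (hs : x + y + z ≤ 1) :
    eofSqMajorant (4 * (x * y)) + eofSqMajorant (4 * (x * z)) + eofSqMajorant (4 * (y * z)) ≤
      (x + y + z) ^ 2 := by
  unfold eofSqMajorant
  linarith [sum_sq_mul_le hx hy hz hs]

/-- All three-qubit W-class pure states satisfy the source-entanglement
monogamy relation `E_s² ≥ E₁₂² + E₁₃² + E₂₃²`. -/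
theorem source_monogamy_W_class (x y z t : ℝ) (hx : 0 < x) (hy : 0 < y) (hz : 0 < z)
    (ht : 0 ≤ t) (hsum : x + y + z + t = 1) :
    (1 - t ^ 3) ^ 2 ≥
      (eof (2 * Real.sqrt (x * y))) ^ 2 + (eof (2 * Real.sqrt (x * z))) ^ 2 +
        (eof (2 * Real.sqrt (y * z))) ^ 2 := by
  have hxyz : x + y + z = 1 - t := by linarith
  have ht1 : t ≤ 1 := by linarith
  calc eof (2 * √(x * y)) ^ 2 + eof (2 * √(x * z)) ^ 2 + eof (2 * √(y * z)) ^ 2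
      ≤ eofSqMajorant (4 * (x * y)) + eofSqMajorant (4 * (x * z)) + eofSqMajorant (4 * (y * z)) :=
        add_le_add_three (eof_two_sqrt_mul_sq_le hx hy (by linarith))
          (eof_two_sqrt_mul_sq_le hx hz (by linarith)) (eof_two_sqrt_mul_sq_le hy hz (by linarith))
    _ ≤ (x + y + z) ^ 2 := eofSqMajorant_sum_le hx.le hy.le hz.le (by linarith)
    _ ≤ (1 - t ^ 3) ^ 2 := by
        rw [hxyz]
        gcongr
        exact pow_le_of_le_one ht ht1 (by norm_num)
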